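/- Assume in addition 0 ≤ t₀ < t₁ ≤ T. For every τ ∈ ℝ there exists a constant C > 0, depending only on τ, T, λ, M, t₀ and t₁, such that for all s ≥ 1 and all h ∈ [0, M], the function t ↦ (τ/2 − s·α(t)) · (t₀ + t₁ − 2t)/γ(t) is differentiable on (t₀, t₁) and its derivative satisfies |d/dt [(τ/2 − s·α(t)) · (t₀ + t₁ − 2t)/γ(t)]| ≤ C · s · ξ(t)³ for all t ∈ (t₀, t₁). -/

import Mathlib

open Real Set

/-!
Write `u = (t - t₀)(t₁ - t)`, so that `u'' = -2` and `u'² + 4u = (t₁ - t₀)²`. With `κ = τ/2` and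
`c = s (e^{2λM} - e^{λh})`, the function is `κ u'/u - c u'/u²`, whose derivative is
`(c (2u'² + 2u) - κ (2u + u'²) u) / u³`. The identity bounds the numerator by
`2|c|(t₁ - t₀)² + |κ|(t₁ - t₀)⁴/4`, and `0 ≤ c ≤ s e^{2λM}`, `u³ ξ³ = e^{3λh} ≥ 1` finish the proof.
-/

lemma hasDerivAt_bubble (t₀ t₁ t : ℝ) :
    HasDerivAt (fun x => (x - t₀) * (t₁ - x)) (t₀ + t₁ - 2 * t) t := by
  have := ((hasDerivAt_id t).sub_const t₀).mul ((hasDerivAt_const t t₁).sub (hasDerivAt_id t))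
  exact this.congr_deriv (by simp only [Pi.sub_apply, id_eq]; ring)

lemma sq_add_four_mul_bubble (t₀ t₁ t : ℝ) :
    (t₀ + t₁ - 2 * t) ^ 2 + 4 * ((t - t₀) * (t₁ - t)) = (t₁ - t₀) ^ 2 := by
  ring

lemma hasDerivAt_weight_mul_logDeriv_bubble (t₀ t₁ κ s a t : ℝ)
    (ht : (t - t₀) * (t₁ - t) ≠ 0) :
    HasDerivAt
      (fun x => (κ - s * (a / ((x - t₀) * (t₁ - x)))) * (t₀ + t₁ - 2 * x) / ((x - t₀) * (t₁ - x)))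
      ((s * a * (2 * (t₀ + t₁ - 2 * t) ^ 2 + 2 * ((t - t₀) * (t₁ - t)))
        - κ * (2 * ((t - t₀) * (t₁ - t)) + (t₀ + t₁ - 2 * t) ^ 2) * ((t - t₀) * (t₁ - t)))
        / ((t - t₀) * (t₁ - t)) ^ 3) t := by
  have hu := hasDerivAt_bubble t₀ t₁ t
  have hg : HasDerivAt (fun x => t₀ + t₁ - 2 * x) (-2) t := by
    simpa using ((hasDerivAt_id t).const_mul 2).const_sub (t₀ + t₁)
  have := ((((hasDerivAt_const t a).div hu ht).const_mul s).const_sub κ |>.mul hg).div hu ht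
  simp only [Pi.div_apply, Pi.mul_apply] at this
  refine this.congr_deriv ?_
  generalize (t - t₀) * (t₁ - t) = u at ht ⊢
  field_simp
  ring

lemma abs_carleman_numerator_le {g u L κ c : ℝ} (hu : 0 < u) (hL : g ^ 2 + 4 * u = L ^ 2) :
    |c * (2 * g ^ 2 + 2 * u) - κ * (2 * u + g ^ 2) * u| ≤ 2 * |c| * L ^ 2 + |κ| * L ^ 4 / 4 := by
  have h1 : |c * (2 * g ^ 2 + 2 * u)| ≤ 2 * |c| * L ^ 2 := by
    rw [abs_mul, abs_of_nonneg (by nlinarith [sq_nonneg g] : 0 ≤ 2 * g ^ 2 + 2 * u)]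
    nlinarith [abs_nonneg c]
  have h2 : |κ * (2 * u + g ^ 2) * u| ≤ |κ| * L ^ 4 / 4 := by
    rw [abs_mul, abs_mul, abs_of_nonneg (by nlinarith [sq_nonneg g] : 0 ≤ 2 * u + g ^ 2),
      abs_of_pos hu]
    have : (2 * u + g ^ 2) * u ≤ L ^ 4 / 4 := by
      nlinarith [sq_nonneg (2 * u - L ^ 2 / 2), sq_nonneg g]
    nlinarith [abs_nonneg κ]
  exact (abs_sub _ _).trans (add_le_add h1 h2)

theorem stmt7_general (t₀ t₁ : ℝ) (ht : t₀ < t₁)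
    (lam M : ℝ) (hlam : 1 ≤ lam)
    (γ : ℝ → ℝ) (ξ α : ℝ → ℝ → ℝ)
    (hγ : ∀ t, γ t = (t - t₀) * (t₁ - t))
    (hξ : ∀ h t, ξ h t = Real.exp (lam * h) / γ t)
    (hα : ∀ h t, α h t = (Real.exp (2 * lam * M) - Real.exp (lam * h)) / γ t)
    (τ : ℝ) :
    ∃ C > 0, ∀ s ≥ (1 : ℝ), ∀ h, 0 ≤ h → h ≤ M →
      ∀ t ∈ Ioo t₀ t₁,
        DifferentiableAt ℝ (fun t => (τ / 2 - s * α h t) * (t₀ + t₁ - 2 * t) / γ t) t ∧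
        |deriv (fun t => (τ / 2 - s * α h t) * (t₀ + t₁ - 2 * t) / γ t) t| ≤
          C * s * (ξ h t) ^ 3 := by
  set E := Real.exp (2 * lam * M)
  set L := t₁ - t₀
  have hL : 0 < L := sub_pos.2 ht
  refine ⟨2 * E * L ^ 2 + |τ| * L ^ 4 / 8, by positivity, ?_⟩
  intro s hs h hh₀ hhM t ⟨htl, htr⟩
  have hu : 0 < (t - t₀) * (t₁ - t) := mul_pos (sub_pos.2 htl) (sub_pos.2 htr)
  have hexp : 1 ≤ Real.exp (lam * h) := Real.one_le_exp (by nlinarith)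
  have hexpE : Real.exp (lam * h) ≤ E := Real.exp_le_exp.2 (by nlinarith)
  have hd :=
    hasDerivAt_weight_mul_logDeriv_bubble t₀ t₁ (τ / 2) s (E - Real.exp (lam * h)) t hu.ne'
  simp only [hα, hγ, hξ]
  refine ⟨hd.differentiableAt, ?_⟩
  rw [hd.deriv, abs_div, abs_of_pos (pow_pos hu 3), div_pow, ← mul_div_assoc,
    div_le_div_iff_of_pos_right (pow_pos hu 3)]
  have hA : |s * (E - Real.exp (lam * h))| ≤ s * E := by
    rw [abs_mul, abs_of_pos (by linarith), abs_of_nonneg (by linarith)]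
    nlinarith
  calc _ ≤ 2 * |s * (E - Real.exp (lam * h))| * L ^ 2 + |τ / 2| * L ^ 4 / 4 :=
        abs_carleman_numerator_le hu (sq_add_four_mul_bubble t₀ t₁ t)
    _ ≤ (2 * E * L ^ 2 + |τ| * L ^ 4 / 8) * s := by
        have hτ : 0 ≤ |τ| * L ^ 4 / 8 := by positivity
        rw [abs_div, abs_two]
        nlinarith [mul_le_mul_of_nonneg_right hA (sq_nonneg L), mul_le_mul_of_nonneg_left hs hτ]
    _ ≤ _ := le_mul_of_one_le_right (by positivity) (one_le_pow₀ hexp)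

/-- Property (d) of the Carleman weights: the function
`t ↦ (τ/2 − sα(t)) (t₀ + t₁ − 2t)/γ(t)` is differentiable on `(t₀, t₁)` with
`|∂_t((τ/2 − sα) ∂_t log γ)| ≤ C s ξ³`, the constant `C` depending only on
`τ, T, λ, M, t₀, t₁`, uniformly in `s ≥ 1` and `h ∈ [0, M]`. -/
theorem stmt7 (T t₀ t₁ : ℝ) (ht₀ : 0 ≤ t₀) (ht : t₀ < t₁) (ht₁ : t₁ ≤ T)
    (lam M : ℝ) (hlam : 1 ≤ lam) (hM : 0 < M)
    (γ : ℝ → ℝ) (ξ α : ℝ → ℝ → ℝ)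
    (hγ : ∀ t, γ t = (t - t₀) * (t₁ - t))
    (hξ : ∀ h t, ξ h t = Real.exp (lam * h) / γ t)
    (hα : ∀ h t, α h t = (Real.exp (2 * lam * M) - Real.exp (lam * h)) / γ t)
    (τ : ℝ) :
    ∃ C > 0, ∀ s ≥ (1 : ℝ), ∀ h, 0 ≤ h → h ≤ M →
      ∀ t ∈ Ioo t₀ t₁,
        DifferentiableAt ℝ (fun t => (τ / 2 - s * α h t) * (t₀ + t₁ - 2 * t) / γ t) t ∧
        |deriv (fun t => (τ / 2 - s * α h t) * (t₀ + t₁ - 2 * t) / γ t) t| ≤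
          C * s * (ξ h t) ^ 3 :=
  stmt7_general t₀ t₁ ht lam M hlam γ ξ α hγ hξ hα τ
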